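/- In a Shapley-Scarf market with preferences from an objective indifferences domain, if the core of the market is non-empty, then for every tie-breaking profile ≻, the allocation TTC_≻(R) is in the core. -/

import Mathlib

/-!
Fix a core allocation `x`. Along the rounds of `TTC_≻`, the core houses of the remaining agents
lie in the same blocks, counted with multiplicity, as their endowments. So every agent on a
trading cycle receives a house at least as good as some remaining house in the block of its core
house, hence at least as good as its core house. Since `x` is unblocked, the cycle cannot do
strictly better for anyone, so with objective indifferences everyone on it receives a house in
the block of its core house, and removing the cycle keeps the invariant. In the end every agent
is indifferent between its `TTC_≻` house and its core house, so a coalition blocking `TTC_≻(R)`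
would block `x`.
-/

open scoped Classical

namespace ShapleyScarf

/-- A weak preference relation: complete (total) and transitive, hence reflexive. -/
structure WeakOrder (H : Type*) where
  rel : H → H → Prop
  total : ∀ a b, rel a b ∨ rel b a
  trans : ∀ a b c, rel a b → rel b c → rel a c

namespace WeakOrder
variable {H : Type*}
/-- Strict part `P` of a weak preference. -/
def P (R : WeakOrder H) (a b : H) : Prop := R.rel a b ∧ ¬ R.rel b a
/-- Indifference part `I` of a weak preference. -/
def I (R : WeakOrder H) (a b : H) : Prop := R.rel a b ∧ R.rel b a
end WeakOrder

/-- `lt` is a strict linear order on agents (a tie-breaking order). -/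
def IsTieBreak {n : ℕ} (lt : Fin n → Fin n → Prop) : Prop :=
  (∀ a b, a ≠ b → lt a b ∨ lt b a) ∧ Transitive lt ∧ ∀ a, ¬ lt a a

section Defs
variable {n : ℕ} {H : Type*} {B : Type*}

/-- Strict part of the tie-broken preference `P_{i,≻}`: `a` above `b` iff
`a P b`, or `a I b` and the owner of `a` comes before the owner of `b` in `≻_i`. -/
def tieBroken (w : Fin n ≃ H) (R : WeakOrder H) (lt : Fin n → Fin n → Prop) (a b : H) : Prop :=
  R.P a b ∨ (R.I a b ∧ lt (w.symm a) (w.symm b))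

/-- The weak tie-broken relation `R_{i,≻}` (reflexive closure of the strict part). -/
def tieBrokenWeak (w : Fin n ≃ H) (R : WeakOrder H) (lt : Fin n → Fin n → Prop)
    (a b : H) : Prop :=
  a = b ∨ tieBroken w R lt a b

/-- The owner (in `S`) of the `pref`-best house among the endowments of the
remaining agents `S`; the agent with this endowment is whom `i` points at. -/
noncomputable def point (w : Fin n ≃ H) (pref : H → H → Prop) (S : Finset (Fin n))
    (i : Fin n) : Fin n :=
  if h : (S.filter fun m => ∀ j ∈ S, j = m ∨ pref (w m) (w j)).Nonempty then
    (S.filter fun m => ∀ j ∈ S, j = m ∨ pref (w m) (w j)).min' h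
  else i

/-- The agents of `S` lying on some trading cycle of the pointing map. -/
noncomputable def cycleAgents (w : Fin n ≃ H) (pref : Fin n → H → H → Prop)
    (S : Finset (Fin n)) : Finset (Fin n) :=
  S.filter fun i => ∃ k, 0 < k ∧ (fun j => point w (pref j) S j)^[k] i = i

/-- Top trading cycles on strict preferences, fuel-based recursion: in each round all
current trading cycles are executed and their agents removed. -/
noncomputable def TTCaux (w : Fin n ≃ H) (pref : Fin n → H → H → Prop) :
    ℕ → Finset (Fin n) → Fin n → H
  | 0, _, i => w i
  | fuel + 1, S, i =>
      if i ∈ cycleAgents w pref S then w (point w (pref i) S i)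
      else TTCaux w pref fuel (S \ cycleAgents w pref S) i

/-- Gale's top trading cycles algorithm for a strict preference profile. -/
noncomputable def TTCstrict (w : Fin n ≃ H) (pref : Fin n → H → H → Prop) : Fin n → H :=
  TTCaux w pref n Finset.univ

/-- Round (executed-cycle index, starting from 1) at which an agent is assigned. -/
noncomputable def TTCroundAux (w : Fin n ≃ H) (pref : Fin n → H → H → Prop) :
    ℕ → Finset (Fin n) → Fin n → ℕ
  | 0, _, _ => 1
  | fuel + 1, S, i =>
      if i ∈ cycleAgents w pref S then 1
      else TTCroundAux w pref fuel (S \ cycleAgents w pref S) i + 1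

/-- TTC with fixed tie-breaking: `TTC_≻(R) = TTC(R_≻)`. -/
noncomputable def TTCtb (w : Fin n ≃ H) (R : Fin n → WeakOrder H)
    (tb : Fin n → Fin n → Fin n → Prop) : Fin n → H :=
  TTCstrict w fun i => tieBroken w (R i) (tb i)

/-- The round in which agent `i` is assigned under `TTC_≻(R)`. -/
noncomputable def TTCtbRound (w : Fin n ≃ H) (R : Fin n → WeakOrder H)
    (tb : Fin n → Fin n → Fin n → Prop) (i : Fin n) : ℕ :=
  TTCroundAux w (fun a => tieBroken w (R a) (tb a)) n Finset.univ i

/-- Objective indifferences w.r.t. the partition of `H` into the fibers of `blk`: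
indifference holds exactly between houses in the same block. -/
def ObjInd (blk : H → B) (R : WeakOrder H) : Prop :=
  ∀ a b, R.I a b ↔ blk a = blk b

/-- `x` is blocked: some coalition `Q` can reallocate its own endowments making
all its members weakly better off and one strictly better off. -/
def Blocks (w : Fin n ≃ H) (R : Fin n → WeakOrder H) (x : Fin n → H) : Prop :=
  ∃ (Q : Finset (Fin n)) (y : Fin n ≃ H),
    Q.image (⇑y) = Q.image (⇑w) ∧
    (∀ i ∈ Q, (R i).rel (y i) (x i)) ∧
    ∃ i ∈ Q, (R i).P (y i) (x i)

/-- `x` is weakly blocked: some nonempty coalition can reallocate its own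
endowments making all of its members strictly better off. -/
def WeaklyBlocks (w : Fin n ≃ H) (R : Fin n → WeakOrder H) (x : Fin n → H) : Prop :=
  ∃ Q : Finset (Fin n), Q.Nonempty ∧ ∃ y : Fin n ≃ H,
    Q.image (⇑y) = Q.image (⇑w) ∧ ∀ i ∈ Q, (R i).P (y i) (x i)

/-- `y` Pareto dominates `x`. -/
def ParetoDom (R : Fin n → WeakOrder H) (y x : Fin n → H) : Prop :=
  (∀ i, (R i).rel (y i) (x i)) ∧ ∃ i, (R i).P (y i) (x i)

end Defs

open Function

section TieBreaking
variable {n : ℕ} {H : Type*}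

lemma WeakOrder.rel_refl (R : WeakOrder H) (a : H) : R.rel a a := (R.total a a).elim id id

lemma WeakOrder.P.trans_rel {R : WeakOrder H} {a b c : H} (hab : R.P a b) (hbc : R.rel b c) :
    R.P a c :=
  ⟨R.trans _ _ _ hab.1 hbc, fun hca => hab.2 (R.trans _ _ _ hbc hca)⟩

lemma WeakOrder.rel.trans_P {R : WeakOrder H} {a b c : H} (hab : R.rel a b) (hbc : R.P b c) :
    R.P a c :=
  ⟨R.trans _ _ _ hab hbc.1, fun hca => hbc.2 (R.trans _ _ _ hca hab)⟩

lemma tieBroken.rel {w : Fin n ≃ H} {R : WeakOrder H} {lt : Fin n → Fin n → Prop} {a b : H}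
    (h : tieBroken w R lt a b) : R.rel a b :=
  h.elim And.left fun h => h.1.1

lemma isStrictTotalOrder_tieBroken (w : Fin n ≃ H) (R : WeakOrder H)
    {lt : Fin n → Fin n → Prop} (hlt : IsTieBreak lt) :
    IsStrictTotalOrder H (tieBroken w R lt) where
  irrefl a h := h.elim (fun h => h.2 h.1) fun h => hlt.2.2 _ h.2
  trans a b c hab hbc := by
    rcases hab with hab | ⟨hab, lab⟩
    · exact Or.inl (hab.trans_rel (tieBroken.rel hbc))
    rcases hbc with hbc | ⟨hbc, lbc⟩
    · exact Or.inl (hab.1.trans_P hbc)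
    · exact Or.inr ⟨⟨R.trans _ _ _ hab.1 hbc.1, R.trans _ _ _ hbc.2 hab.2⟩, hlt.2.1 lab lbc⟩
  trichotomous a b hab hba := by
    by_contra hne
    have hne' : w.symm a ≠ w.symm b := w.symm.injective.ne hne
    by_cases h₁ : R.rel a b <;> by_cases h₂ : R.rel b a
    · exact (hlt.1 _ _ hne').elim (fun h => hab (Or.inr ⟨⟨h₁, h₂⟩, h⟩))
        fun h => hba (Or.inr ⟨⟨h₂, h₁⟩, h⟩)
    · exact hab (Or.inl ⟨h₁, h₂⟩)
    · exact hba (Or.inl ⟨h₂, h₁⟩)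
    · exact (R.total a b).elim h₁ h₂

end TieBreaking

section TopTradingCycles
variable {n : ℕ} {H : Type*} (w : Fin n ≃ H) (pref : Fin n → H → H → Prop)

lemma exists_top {p : H → H → Prop} (hp : IsStrictTotalOrder H p) {S : Finset (Fin n)}
    (hS : S.Nonempty) : ∃ m ∈ S, ∀ j ∈ S, j = m ∨ p (w m) (w j) := by
  have hwf : WellFounded fun a b : Fin n => p (w a) (w b) :=
    @Finite.wellFounded_of_trans_of_irrefl _ _ _ ⟨fun _ _ _ => hp.trans _ _ _⟩
      ⟨fun _ => hp.irrefl _⟩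
  obtain ⟨m, hmS, hm⟩ := hwf.has_min S hS
  refine ⟨m, hmS, fun j hj => ?_⟩
  rcases trichotomous (r := p) (w m) (w j) with h | h | h
  · exact Or.inr h
  · exact Or.inl (w.injective h).symm
  · exact absurd h (hm j hj)

noncomputable def pointing (S : Finset (Fin n)) (i : Fin n) : Fin n := point w (pref i) S i

variable {w pref} {S : Finset (Fin n)}

lemma pointing_mem {i : Fin n} (hi : i ∈ S) : pointing w pref S i ∈ S := by
  unfold pointing point
  split
  · exact (Finset.mem_filter.1 (Finset.min'_mem _ _)).1
  · exact hi

lemma pointing_isTop {i : Fin n} (hp : IsStrictTotalOrder H (pref i)) (hS : S.Nonempty) :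
    ∀ j ∈ S, j = pointing w pref S i ∨ pref i (w (pointing w pref S i)) (w j) := by
  obtain ⟨m, hm, htop⟩ := exists_top w hp hS
  have hne : (S.filter fun m => ∀ j ∈ S, j = m ∨ pref i (w m) (w j)).Nonempty :=
    ⟨m, Finset.mem_filter.2 ⟨hm, htop⟩⟩
  unfold pointing point
  rw [dif_pos hne]
  exact (Finset.mem_filter.1 (Finset.min'_mem _ hne)).2

lemma mem_cycleAgents {i : Fin n} :
    i ∈ cycleAgents w pref S ↔ i ∈ S ∧ i ∈ periodicPts (pointing w pref S) :=
  Finset.mem_filter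

lemma cycleAgents_subset : cycleAgents w pref S ⊆ S := Finset.filter_subset _ _

lemma cycleAgents_empty : cycleAgents w pref (∅ : Finset (Fin n)) = ∅ := Finset.filter_empty _

lemma cycleAgents_nonempty (hS : S.Nonempty) : (cycleAgents w pref S).Nonempty := by
  obtain ⟨i, hi⟩ := hS
  set f := pointing w pref S
  have horbit : ∀ k, f^[k] i ∈ S := fun k => by
    induction k with
    | zero => exact hi
    | succ k ih => rw [iterate_succ_apply']; exact pointing_mem ih
  obtain ⟨a, b, hne, heq⟩ := Finite.exists_ne_map_eq_of_infinite fun k => f^[k] i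
  wlog hab : a < b generalizing a b
  · exact this b a hne.symm heq.symm (by omega)
  refine ⟨f^[a] i, mem_cycleAgents.2 ⟨horbit a, b - a, by omega, ?_⟩⟩
  rw [IsPeriodicPt, IsFixedPt, ← iterate_add_apply, Nat.sub_add_cancel hab.le, heq]

lemma bijOn_pointing_cycleAgents :
    Set.BijOn (pointing w pref S) (cycleAgents w pref S) (cycleAgents w pref S) := by
  have hmaps : Set.MapsTo (pointing w pref S) (cycleAgents w pref S) (cycleAgents w pref S) :=
    fun i hi => by
      obtain ⟨hiS, hper⟩ := mem_cycleAgents.1 hi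
      exact mem_cycleAgents.2 ⟨pointing_mem hiS, (bijOn_periodicPts _).mapsTo hper⟩
  refine ((cycleAgents w pref S).finite_toSet.injOn_iff_bijOn_of_mapsTo hmaps).1 ?_
  exact (bijOn_periodicPts _).injOn.mono fun i hi => (mem_cycleAgents.1 hi).2

lemma exists_perm_eq_pointing_on_cycleAgents : ∃ π : Equiv.Perm (Fin n),
    (∀ i ∈ cycleAgents w pref S, π i = pointing w pref S i) ∧
      ∀ i ∉ cycleAgents w pref S, π i = i :=
  ⟨Equiv.Perm.ofSubtype (bijOn_pointing_cycleAgents.equiv _),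
    fun _ hi => Equiv.Perm.ofSubtype_apply_of_mem _ hi,
    fun _ hi => Equiv.Perm.ofSubtype_apply_of_not_mem _ hi⟩

lemma TTCaux_empty (fuel : ℕ) : TTCaux w pref fuel ∅ = w := by
  induction fuel with
  | zero => rfl
  | succ fuel ih =>
    funext i
    simp only [TTCaux, cycleAgents_empty, Finset.notMem_empty, if_false, Finset.sdiff_empty, ih]

/-- Fuel `S.card` suffices since every round removes at least one agent. -/
theorem TTCaux_induction {P : Finset (Fin n) → (Fin n → H) → Prop} (empty : P ∅ w)
    (round : ∀ S : Finset (Fin n), S.Nonempty → ∀ g, P (S \ cycleAgents w pref S) g →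
      P S fun i => if i ∈ cycleAgents w pref S then w (pointing w pref S i) else g i) :
    ∀ fuel (S : Finset (Fin n)), S.card ≤ fuel → P S (TTCaux w pref fuel S) := by
  intro fuel
  induction fuel with
  | zero =>
    intro S hS
    rw [Finset.card_eq_zero.1 (Nat.le_zero.1 hS), TTCaux_empty]
    exact empty
  | succ fuel ih =>
    intro S hS
    rcases S.eq_empty_or_nonempty with rfl | hne
    · rw [TTCaux_empty]; exact empty
    have hlt : (S \ cycleAgents w pref S).card < S.card :=
      Finset.card_lt_card (Finset.sdiff_ssubset cycleAgents_subset (cycleAgents_nonempty hne))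
    exact round S hne _ (ih _ (by omega))

theorem TTCstrict_bijective : Bijective (TTCstrict w pref) := by
  suffices ∀ fuel (S : Finset (Fin n)), S.card ≤ fuel →
      (∀ i ∉ S, TTCaux w pref fuel S i = w i) ∧ Bijective (TTCaux w pref fuel S) from
    (this n Finset.univ (by simp)).2
  refine TTCaux_induction (P := fun S g => (∀ i ∉ S, g i = w i) ∧ Bijective g)
    ⟨fun _ _ => rfl, w.bijective⟩ fun S _ g hg => ?_
  obtain ⟨hg, hgbij⟩ := hg
  obtain ⟨π, hπC, hπ⟩ := exists_perm_eq_pointing_on_cycleAgents (w := w) (pref := pref) (S := S)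
  -- `g` still hands out the cycle agents' own endowments
  have hcomp : (fun i => if i ∈ cycleAgents w pref S then w (pointing w pref S i) else g i)
      = g ∘ π := by
    funext i
    by_cases hi : i ∈ cycleAgents w pref S
    · have hmem := bijOn_pointing_cycleAgents.mapsTo hi
      rw [if_pos hi, comp_apply, hπC i hi, hg _ fun h => (Finset.mem_sdiff.1 h).2 hmem]
    · rw [if_neg hi, comp_apply, hπ i hi]
  rw [hcomp]
  refine ⟨fun i hi => ?_, hgbij.comp π.bijective⟩
  have hiC : i ∉ cycleAgents w pref S := fun h => hi (cycleAgents_subset h)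
  rw [comp_apply, hπ i hiC, hg i fun h => hi (Finset.mem_sdiff.1 h).1]

end TopTradingCycles

lemma multiset_map_sdiff_eq {α β : Type*} [DecidableEq α] {f g : α → β} {s t : Finset α}
    (hts : t ⊆ s) (hs : s.val.map f = s.val.map g) (ht : t.val.map f = t.val.map g) :
    (s \ t).val.map f = (s \ t).val.map g := by
  have hsplit : s.val = (s \ t).val + t.val := by
    rw [Finset.sdiff_val, tsub_add_cancel_of_le (Finset.val_le_iff.2 hts)]
  rw [hsplit, Multiset.map_add, Multiset.map_add, ht] at hs
  exact add_right_cancel hs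

section Core
variable {n : ℕ} {H B : Type*} {w : Fin n ≃ H} {R : Fin n → WeakOrder H}

lemma Blocks.of_forall_rel {x x' : Fin n → H} (h : ∀ i, (R i).rel (x i) (x' i))
    (hb : Blocks w R x) : Blocks w R x' := by
  obtain ⟨Q, y, himg, hrel, i, hi, hP⟩ := hb
  exact ⟨Q, y, himg, fun j hj => (R j).trans _ _ _ (hrel j hj) (h j), i, hi, hP.trans_rel (h i)⟩

/-- Otherwise `C` blocks `x` by trading its endowments along `π`. -/
lemma blk_trade_eq_of_not_blocks {blk : H → B} (hR : ∀ i, ObjInd blk (R i))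
    {x : Fin n → H} (hx : ¬ Blocks w R x) {C S : Finset (Fin n)} {π : Equiv.Perm (Fin n)}
    (hπ : C.image π = C) (htop : ∀ j ∈ C, ∀ m ∈ S, (R j).rel (w (π j)) (w m))
    (hpool : ∀ j ∈ C, ∃ m ∈ S, blk (w m) = blk (x j)) {j : Fin n} (hj : j ∈ C) :
    blk (w (π j)) = blk (x j) := by
  have hrel : ∀ j ∈ C, (R j).rel (w (π j)) (x j) := fun j hj => by
    obtain ⟨m, hm, hblk⟩ := hpool j hj
    exact (R j).trans _ _ _ (htop j hj m hm) ((hR j _ _).2 hblk).1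
  refine (hR j _ _).1 ⟨hrel j hj, ?_⟩
  by_contra hnot
  have himg : C.image (π.trans w) = C.image w := by
    rw [Equiv.coe_trans, ← Finset.image_image, hπ]
  exact hx ⟨C, π.trans w, himg, hrel, j, hj, hrel j hj, hnot⟩

variable {pref : Fin n → H → H → Prop} {blk : H → B}

theorem blk_TTCaux_eq_of_not_blocks (hR : ∀ i, ObjInd blk (R i))
    (hpref : ∀ j, IsStrictTotalOrder H (pref j)) (hrefine : ∀ j a b, pref j a b → (R j).rel a b)
    {x : Fin n → H} (hx : ¬ Blocks w R x) :
    ∀ fuel (S : Finset (Fin n)), S.card ≤ fuel →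
      S.val.map (blk ∘ x) = S.val.map (blk ∘ w) →
        ∀ i ∈ S, blk (TTCaux w pref fuel S i) = blk (x i) := by
  refine TTCaux_induction (P := fun S g => S.val.map (blk ∘ x) = S.val.map (blk ∘ w) →
    ∀ i ∈ S, blk (g i) = blk (x i)) (by simp) fun S hS g ih hpool => ?_
  set C := cycleAgents w pref S
  obtain ⟨π, hπC, hπ⟩ := exists_perm_eq_pointing_on_cycleAgents (w := w) (pref := pref) (S := S)
  have htop : ∀ j ∈ C, ∀ m ∈ S, (R j).rel (w (π j)) (w m) := fun j hj m hm => by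
    rw [hπC j hj]
    rcases pointing_isTop (hpref j) hS m hm with h | h
    · rw [← h]; exact (R j).rel_refl _
    · exact hrefine j _ _ h
  have hCπ : C.image π = C := by
    simpa [Finset.map_eq_image] using
      Finset.map_perm (s := C) (σ := π) fun a ha => by_contra fun h => ha (hπ a h)
  have hcycle : ∀ j ∈ C, blk (w (π j)) = blk (x j) := fun j hj =>
    blk_trade_eq_of_not_blocks hR hx hCπ htop (fun j hj =>
      Multiset.mem_map.1 (hpool ▸ Multiset.mem_map_of_mem (blk ∘ x) (cycleAgents_subset hj))) hj
  have hC : C.val.map (blk ∘ x) = C.val.map (blk ∘ w) := calc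
    C.val.map (blk ∘ x) = C.val.map (blk ∘ w ∘ π) :=
      Multiset.map_congr rfl fun j hj => (hcycle j hj).symm
    _ = (C.image π).val.map (blk ∘ w) := by
      rw [Finset.image_val_of_injOn π.injective.injOn, Multiset.map_map]; rfl
    _ = C.val.map (blk ∘ w) := by rw [hCπ]
  have hrest := ih (multiset_map_sdiff_eq cycleAgents_subset hpool hC)
  intro i hi
  by_cases hiC : i ∈ C
  · simp only [if_pos hiC, ← hπC i hiC]
    exact hcycle i hiC
  · simp only [if_neg hiC]
    exact hrest i (Finset.mem_sdiff.2 ⟨hi, hiC⟩)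

theorem blk_TTCstrict_eq_of_not_blocks (hR : ∀ i, ObjInd blk (R i))
    (hpref : ∀ j, IsStrictTotalOrder H (pref j)) (hrefine : ∀ j a b, pref j a b → (R j).rel a b)
    {x : Fin n ≃ H} (hx : ¬ Blocks w R x) (i : Fin n) :
    blk (TTCstrict w pref i) = blk (x i) := by
  refine blk_TTCaux_eq_of_not_blocks hR hpref hrefine hx n Finset.univ (by simp) ?_ i
    (Finset.mem_univ i)
  have hx : ⇑x = w ∘ (x.trans w.symm) := by ext; simp
  rw [hx, ← comp_assoc, ← Multiset.map_map, Multiset.map_univ_val_equiv]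

end Core

/-- on an objective indifferences domain, if the core is non-empty then
every `TTC_≻` selects a core allocation. -/
theorem TTCtb_coreSelecting_objInd {n : ℕ} {H B : Type*} (w : Fin n ≃ H)
    (blk : H → B) (R : Fin n → WeakOrder H) (hR : ∀ i, ObjInd blk (R i))
    (tb : Fin n → Fin n → Fin n → Prop) (htb : ∀ i, IsTieBreak (tb i))
    (hcore : ∃ x : Fin n ≃ H, ¬ Blocks w R ⇑x) :
    Function.Bijective (TTCtb w R tb) ∧ ¬ Blocks w R (TTCtb w R tb) := by
  obtain ⟨x, hx⟩ := hcore
  have hblk : ∀ i, blk (TTCtb w R tb i) = blk (x i) :=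
    blk_TTCstrict_eq_of_not_blocks hR (fun j => isStrictTotalOrder_tieBroken w (R j) (htb j))
      (fun _ _ _ => tieBroken.rel) hx
  exact ⟨TTCstrict_bijective, fun hb => hx (hb.of_forall_rel fun i => ((hR i _ _).2 (hblk i)).1)⟩

end ShapleyScarf
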